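/- Let U and V be real orthogonal s×s matrices, Σ any real s×s matrix, M and K real n×n matrices, and τ a real number; set A := UΣVᵀ, Θ := Iₛ⊗M + τ A⊗K, and P_RK := (U⊗Iₙ)(Iₛ⊗M + τΣ⊗K)(Vᵀ⊗Iₙ). Then for every λ ∈ ℂ the following are equivalent (all matrices embedded into ℂ): (i) there exists a nonzero x ∈ ℂ^{s·n} with Θx = λ P_RK x; (ii) there exists a nonzero y ∈ ℂ^{s·n} with ((UᵀV)⊗M + τΣ⊗K)y = λ(Iₛ⊗M + τΣ⊗K)y. Moreover the correspondence between eigenvectors is given by y = (Vᵀ⊗Iₙ)x. -/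

import Mathlib

open Matrix Kronecker

/-!
Since `U Uᵀ = 1` and `V Vᵀ = 1`, the identity factor of `Iₛ ⊗ M` can be written as `U (UᵀV) Vᵀ`, so
`Θ = (U ⊗ Iₙ) ((UᵀV) ⊗ M + τ Σ ⊗ K) (Vᵀ ⊗ Iₙ)` shares its outer factors with `P_RK`. The left
factor `U ⊗ Iₙ` is injective and can be cancelled from `Θ x = λ P_RK x`, and the right factor
`Vᵀ ⊗ Iₙ` is invertible, so `x ↦ (Vᵀ ⊗ Iₙ) x` is a bijection between the eigenvectors of the
two pencils.
-/

namespace Matrix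

section GeneralizedEigenvector

variable {ι κ κ' R : Type*} [Fintype ι] [Fintype κ] [Fintype κ'] [DecidableEq κ']
  [CommRing R]

theorem mulVec_injective_of_mul_eq_one {L' : Matrix κ' κ R} {L : Matrix κ κ' R} (hL : L' * L = 1) :
    Function.Injective L.mulVec := fun a b h => by
  simpa [mulVec_mulVec, hL] using congrArg L'.mulVec h

theorem mulVec_eq_smul_mulVec_conj_iff {L' : Matrix κ' κ R} {L : Matrix κ κ' R} (hL : L' * L = 1)
    (B C : Matrix κ' ι R) (W : Matrix ι ι R) (lam : R) (x : ι → R) :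
    (L * B * W) *ᵥ x = lam • ((L * C * W) *ᵥ x) ↔ B *ᵥ (W *ᵥ x) = lam • (C *ᵥ (W *ᵥ x)) := by
  simp only [Matrix.mul_assoc, ← mulVec_mulVec, ← mulVec_smul]
  exact (mulVec_injective_of_mul_eq_one hL).eq_iff

theorem exists_mulVec_eq_smul_mulVec_conj_iff [DecidableEq ι] {L' : Matrix κ' κ R} {L : Matrix κ κ' R}
    (hL : L' * L = 1) (B C : Matrix κ' ι R) {W' W : Matrix ι ι R} (hW : W' * W = 1) (lam : R) :
    (∃ x, x ≠ 0 ∧ (L * B * W) *ᵥ x = lam • ((L * C * W) *ᵥ x)) ↔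
      ∃ y, y ≠ 0 ∧ B *ᵥ y = lam • (C *ᵥ y) := by
  have hW' : W * W' = 1 := mul_eq_one_comm.mp hW
  simp only [mulVec_eq_smul_mulVec_conj_iff hL]
  constructor
  · rintro ⟨x, hx, hxe⟩
    exact ⟨W *ᵥ x, (mulVec_injective_of_mul_eq_one hW).ne_iff' (mulVec_zero W) |>.mpr hx,
      hxe⟩
  · rintro ⟨y, hy, hye⟩
    have hWW' : W *ᵥ (W' *ᵥ y) = y := by rw [mulVec_mulVec, hW', one_mulVec]
    exact ⟨W' *ᵥ y, fun h => hy (by rw [← hWW', h, mulVec_zero]), by rwa [hWW']⟩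

end GeneralizedEigenvector

section Kronecker

variable {m n R : Type*} [Fintype m] [Fintype n] [DecidableEq m] [DecidableEq n] [CommRing R]

theorem kronecker_one_mul_kronecker_one_eq_one {X' X : Matrix m m R} (h : X' * X = 1) :
    (X' ⊗ₖ (1 : Matrix n n R)) * (X ⊗ₖ 1) = 1 := by
  rw [← mul_kronecker_mul, h, one_mul, one_kronecker_one]

theorem one_kronecker_add_smul_kronecker_eq_mul_mul {U V : Matrix m m R} (hU : U * Uᵀ = 1)
    (hV : V * Vᵀ = 1) (Sig : Matrix m m R) (M K : Matrix n n R) (τ : R) :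
    (1 : Matrix m m R) ⊗ₖ M + τ • ((U * Sig * Vᵀ) ⊗ₖ K) =
      (U ⊗ₖ (1 : Matrix n n R)) * ((Uᵀ * V) ⊗ₖ M + τ • (Sig ⊗ₖ K)) * (Vᵀ ⊗ₖ 1) := by
  have hUV : U * (Uᵀ * V) * Vᵀ = 1 := by rw [← Matrix.mul_assoc, hU, Matrix.one_mul, hV]
  rw [Matrix.mul_add, Matrix.add_mul, Matrix.mul_smul, Matrix.smul_mul, ← mul_kronecker_mul,
    ← mul_kronecker_mul, ← mul_kronecker_mul, ← mul_kronecker_mul, hUV]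
  simp only [Matrix.one_mul, Matrix.mul_one]

end Kronecker

end Matrix

theorem stmt_8 {s n : ℕ}
    (U V Sig : Matrix (Fin s) (Fin s) ℝ) (hU : Uᵀ * U = 1) (hV : Vᵀ * V = 1)
    (M K : Matrix (Fin n) (Fin n) ℝ) (τ : ℝ)
    (A Θ P_RK : Matrix _ _ ℝ)
    (hA : A = U * Sig * Vᵀ)
    (hΘ : Θ = (1 : Matrix (Fin s) (Fin s) ℝ) ⊗ₖ M + τ • (A ⊗ₖ K))
    (hP : P_RK = (U ⊗ₖ (1 : Matrix (Fin n) (Fin n) ℝ)) *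
        ((1 : Matrix (Fin s) (Fin s) ℝ) ⊗ₖ M + τ • (Sig ⊗ₖ K)) *
        (Vᵀ ⊗ₖ (1 : Matrix (Fin n) (Fin n) ℝ)))
    (lam : ℂ) :
    ((∃ x : Fin s × Fin n → ℂ, x ≠ 0 ∧
        (Θ.map Complex.ofReal) *ᵥ x = lam • ((P_RK.map Complex.ofReal) *ᵥ x)) ↔
      (∃ y : Fin s × Fin n → ℂ, y ≠ 0 ∧
        (((Uᵀ * V) ⊗ₖ M + τ • (Sig ⊗ₖ K)).map Complex.ofReal) *ᵥ y =
          lam • ((((1 : Matrix (Fin s) (Fin s) ℝ) ⊗ₖ M + τ • (Sig ⊗ₖ K)).map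
            Complex.ofReal) *ᵥ y))) ∧
    (∀ x : Fin s × Fin n → ℂ, x ≠ 0 →
      (Θ.map Complex.ofReal) *ᵥ x = lam • ((P_RK.map Complex.ofReal) *ᵥ x) →
      (((Vᵀ ⊗ₖ (1 : Matrix (Fin n) (Fin n) ℝ)).map Complex.ofReal) *ᵥ x) ≠ 0 ∧
        (((Uᵀ * V) ⊗ₖ M + τ • (Sig ⊗ₖ K)).map Complex.ofReal) *ᵥ
            (((Vᵀ ⊗ₖ (1 : Matrix (Fin n) (Fin n) ℝ)).map Complex.ofReal) *ᵥ x) =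
          lam • ((((1 : Matrix (Fin s) (Fin s) ℝ) ⊗ₖ M + τ • (Sig ⊗ₖ K)).map
            Complex.ofReal) *ᵥ
            (((Vᵀ ⊗ₖ (1 : Matrix (Fin n) (Fin n) ℝ)).map Complex.ofReal) *ᵥ x))) := by
  let f := Complex.ofRealHom.mapMatrix (m := Fin s × Fin n)
  have hUc : f (Uᵀ ⊗ₖ 1) * f (U ⊗ₖ 1) = 1 := by
    rw [← map_mul, kronecker_one_mul_kronecker_one_eq_one hU, map_one]
  have hVc : f (V ⊗ₖ 1) * f (Vᵀ ⊗ₖ 1) = 1 := by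
    rw [← map_mul, kronecker_one_mul_kronecker_one_eq_one (mul_eq_one_comm.mp hV), map_one]
  have hΘc : Θ.map Complex.ofReal =
      f (U ⊗ₖ 1) * f ((Uᵀ * V) ⊗ₖ M + τ • (Sig ⊗ₖ K)) * f (Vᵀ ⊗ₖ 1) := by
    rw [← map_mul, ← map_mul, hΘ, hA, one_kronecker_add_smul_kronecker_eq_mul_mul
      (mul_eq_one_comm.mp hU) (mul_eq_one_comm.mp hV)]
    rfl
  have hPc : P_RK.map Complex.ofReal =
      f (U ⊗ₖ 1) * f ((1 : Matrix (Fin s) (Fin s) ℝ) ⊗ₖ M + τ • (Sig ⊗ₖ K)) * f (Vᵀ ⊗ₖ 1) := by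
    rw [← map_mul, ← map_mul, hP]
    rfl
  rw [hΘc, hPc]
  refine ⟨exists_mulVec_eq_smul_mulVec_conj_iff hUc _ _ hVc lam, fun x hx hxe => ⟨?_, ?_⟩⟩
  · exact (mulVec_injective_of_mul_eq_one hVc).ne_iff' (mulVec_zero _) |>.mpr hx
  · exact (mulVec_eq_smul_mulVec_conj_iff hUc _ _ _ lam x).mp hxe
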